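/- arXiv:1512.00779 — 2 statements merged into one kernel-verified Lean document; each statement's English description precedes it below -/
import Mathlib

section
/- Let k be a positive integer and let W_1, …, W_{2k} be the dipole words defined by W_{2a−1} = ⋄^{2k+5} 1 1 (⋄1)^{a−1} (1⋄) (⋄1)^{k−a} 1 ⋄^{2k+6} and W_{2a} = 1^{2k+6} 0 (⋄⋄)^{k−a} (1⋄) (⋄⋄)^{a−1} ⋄ ⋄ 1^{2k+5} for a ∈ {1,…,k}. Define V_a = W_{2a−1} ⋄^{6k+14} W_{2a} for a ∈ {1,…,k}, each of length 18k+42. Then for all a, b ∈ {1,…,k}, f(V_a, Rev(V_b)) > 0 if and only if a = b. -/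
/-!
Aligning `V_a` with `Rev V_b` pairs `W_{2a-1}` with `Rev W_{2b}` and `W_{2a}` with `Rev W_{2b-1}`;
the blank middle contributes nothing, and reversing both words turns the second pair into the
first one with `a` and `b` exchanged. In `W_{2a-1}` against `Rev W_{2b}` the only letters that
interact are the final `1` against the `0` (force `+1`) and, in the middle block, the single `1`
of `Rev W_{2b}` in the `b`-th pair, which meets a `1` of `W_{2a-1}` (force `-1`) unless `b = a`.
So each half contributes `1` if `a = b` and `0` otherwise.
-/

/-- The alphabet Σ = {0, 1, ⋄} of dipole letters. -/
inductive Dip : Type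
  | zero : Dip
  | one : Dip
  | blank : Dip
  deriving DecidableEq

open Dip

/-- The force between a pair of letters: 1 if {x,y} = {0,1}, -1 if x = y ∈ {0,1}, 0 otherwise. -/
def lf : Dip → Dip → ℤ
  | zero, one => 1
  | one, zero => 1
  | zero, zero => -1
  | one, one => -1
  | _, _ => 0

/-- The force between a pair of equal-length words: the sum of letterwise forces. -/
def force (X Y : List Dip) : ℤ := (List.zipWith lf X Y).sum

/-- `n` repetitions of a letter. -/
def rep (n : ℕ) (x : Dip) : List Dip := List.replicate n x

/-- `n` repetitions of a word. -/
def rep2 (n : ℕ) (p : List Dip) : List Dip := (List.replicate n p).flatten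

/-- `W_{2a-1} = ⋄^{2k+5} 1 1 (⋄1)^{a-1} (1⋄) (⋄1)^{k-a} 1 ⋄^{2k+6}`. -/
def Wodd (k a : ℕ) : List Dip :=
  rep (2 * k + 5) blank ++ [one, one] ++ rep2 (a - 1) [blank, one] ++ [one, blank] ++
    rep2 (k - a) [blank, one] ++ [one] ++ rep (2 * k + 6) blank

/-- `W_{2a} = 1^{2k+6} 0 (⋄⋄)^{k-a} (1⋄) (⋄⋄)^{a-1} ⋄ ⋄ 1^{2k+5}`. -/
def Weven (k a : ℕ) : List Dip :=
  rep (2 * k + 6) one ++ [zero] ++ rep2 (k - a) [blank, blank] ++ [one, blank] ++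
    rep2 (a - 1) [blank, blank] ++ [blank, blank] ++ rep (2 * k + 5) one

/-- The concatenated word `V_a = W_{2a-1} ⋄^{6k+14} W_{2a}`. -/
def Vword (k a : ℕ) : List Dip := Wodd k a ++ rep (6 * k + 14) blank ++ Weven k a

@[simp] lemma lf_blank_left (y : Dip) : lf blank y = 0 := by cases y <;> rfl

lemma lf_comm (x y : Dip) : lf x y = lf y x := by cases x <;> cases y <;> rfl

@[simp] lemma length_rep (n : ℕ) (x : Dip) : (rep n x).length = n := List.length_replicate

@[simp] lemma reverse_rep (n : ℕ) (x : Dip) : (rep n x).reverse = rep n x :=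
  List.reverse_replicate

@[simp] lemma length_rep2 (n : ℕ) (p : List Dip) : (rep2 n p).length = n * p.length := by
  simp [rep2, List.length_flatten, List.sum_replicate]

lemma rep2_add (m n : ℕ) (p : List Dip) : rep2 (m + n) p = rep2 m p ++ rep2 n p := by
  rw [rep2, List.replicate_add, List.flatten_append]; rfl

lemma rep2_one (p : List Dip) : rep2 1 p = p := by simp [rep2]

@[simp] lemma reverse_rep2 (n : ℕ) (p : List Dip) : (rep2 n p).reverse = rep2 n p.reverse := by
  simp [rep2, List.reverse_flatten]

lemma force_append {X Y : List Dip} (h : X.length = Y.length) (X' Y' : List Dip) :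
    force (X ++ X') (Y ++ Y') = force X Y + force X' Y' := by
  rw [force, List.zipWith_append h, List.sum_append, force, force]

lemma force_comm (X Y : List Dip) : force X Y = force Y X := by
  rw [force, List.zipWith_comm, force]
  simp only [lf_comm]

lemma force_reverse {X Y : List Dip} (h : X.length = Y.length) :
    force X.reverse Y.reverse = force X Y := by
  rw [force, ← List.reverse_zipWith h, List.sum_reverse, force]

lemma force_reverse_right {X Y : List Dip} (h : X.length = Y.length) :
    force X Y.reverse = force Y X.reverse := by
  rw [← force_reverse (by simpa using h), List.reverse_reverse, force_comm]

@[simp] lemma force_rep_blank_left (n : ℕ) (Y : List Dip) : force (rep n blank) Y = 0 := by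
  induction n generalizing Y with
  | zero => rfl
  | succ n ih => cases Y <;> simp_all [force, rep, List.replicate_succ]

lemma force_rep2 {p p' : List Dip} (h : p.length = p'.length) (n : ℕ) :
    force (rep2 n p) (rep2 n p') = n * force p p' := by
  induction n with
  | zero => simp [rep2, force]
  | succ n ih =>
    rw [rep2_add, rep2_add, force_append (by simp [h]), ih, rep2_one, rep2_one]
    push_cast
    ring

/-- `k` copies of the block `p`, the `a`-th of them (counting from `1`) replaced by `q`. -/
def defectWord (k a : ℕ) (p q : List Dip) : List Dip := rep2 (a - 1) p ++ q ++ rep2 (k - a) p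

lemma length_defectWord {k a : ℕ} {p q : List Dip} (ha : 1 ≤ a) (hak : a ≤ k)
    (hq : q.length = p.length) : (defectWord k a p q).length = k * p.length := by
  obtain ⟨i, rfl⟩ : ∃ i, a = i + 1 := ⟨a - 1, by omega⟩
  obtain ⟨d, rfl⟩ : ∃ d, k = i + 1 + d := ⟨k - i - 1, by omega⟩
  simp only [defectWord, List.length_append, length_rep2, hq, Nat.add_sub_cancel,
    Nat.add_sub_cancel_left]
  ring

lemma force_defectWord_of_lt {k a b : ℕ} {p q p' q' : List Dip} (ha : 1 ≤ a) (hab : a < b)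
    (hbk : b ≤ k) (hq : q.length = p.length) (hp' : p'.length = p.length)
    (hq' : q'.length = p.length) :
    force (defectWord k a p q) (defectWord k b p' q') =
      force q p' + force p q' + (k - 2 : ℕ) * force p p' := by
  obtain ⟨i, rfl⟩ : ∃ i, a = i + 1 := ⟨a - 1, by omega⟩
  obtain ⟨c, rfl⟩ : ∃ c, b = i + 1 + c + 1 := ⟨b - i - 2, by omega⟩
  obtain ⟨d, rfl⟩ : ∃ d, k = i + 1 + c + 1 + d := ⟨k - i - c - 2, by omega⟩
  have hA : defectWord (i + 1 + c + 1 + d) (i + 1) p q =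
      rep2 i p ++ (q ++ (rep2 c p ++ (p ++ rep2 d p))) := by
    simp [defectWord, show i + 1 + c + 1 + d - (i + 1) = c + 1 + d by omega, rep2_add, rep2_one]
  have hB : defectWord (i + 1 + c + 1 + d) (i + 1 + c + 1) p' q' =
      rep2 i p' ++ (p' ++ (rep2 c p' ++ (q' ++ rep2 d p'))) := by
    simp [defectWord, show i + 1 + c + 1 - 1 = i + 1 + c by omega, rep2_add, rep2_one]
  rw [hA, hB, force_append (by simp [hp']), force_append (hq.trans hp'.symm),
    force_append (by simp [hp']), force_append hq'.symm, force_rep2 hp'.symm,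
    force_rep2 hp'.symm, force_rep2 hp'.symm, show i + 1 + c + 1 + d - 2 = i + c + d by omega]
  push_cast
  ring

lemma force_defectWord {k a b : ℕ} {p q p' q' : List Dip} (ha : 1 ≤ a) (hak : a ≤ k)
    (hb : 1 ≤ b) (hbk : b ≤ k) (hq : q.length = p.length) (hp' : p'.length = p.length)
    (hq' : q'.length = p.length) :
    force (defectWord k a p q) (defectWord k b p' q') =
      if a = b then force q q' + (k - 1 : ℕ) * force p p'
      else force q p' + force p q' + (k - 2 : ℕ) * force p p' := by
  rcases lt_trichotomy a b with hab | rfl | hba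
  · rw [if_neg hab.ne, force_defectWord_of_lt ha hab hbk hq hp' hq']
  · obtain ⟨i, rfl⟩ : ∃ i, a = i + 1 := ⟨a - 1, by omega⟩
    obtain ⟨d, rfl⟩ : ∃ d, k = i + 1 + d := ⟨k - i - 1, by omega⟩
    simp only [defectWord, if_true, List.append_assoc, Nat.add_sub_cancel, Nat.add_sub_cancel_left]
    rw [force_append (by simp [hp']), force_append (hq.trans hq'.symm), force_rep2 hp'.symm,
      force_rep2 hp'.symm, show i + 1 + d - 1 = i + d by omega]
    push_cast
    ring
  · rw [if_neg hba.ne', force_comm, force_defectWord_of_lt hb hba hak (hq'.trans hp'.symm)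
      hp'.symm (hq.trans hp'.symm), force_comm q', force_comm p', force_comm p']
    ring

lemma Wodd_eq_defectWord (k a : ℕ) :
    Wodd k a = rep (2 * k + 5) blank ++ ([one, one] ++
      (defectWord k a [blank, one] [one, blank] ++ ([one] ++ rep (2 * k + 6) blank))) := by
  simp [Wodd, defectWord]

lemma reverse_Weven_eq_defectWord (k a : ℕ) :
    (Weven k a).reverse = rep (2 * k + 5) one ++ ([blank, blank] ++
      (defectWord k a [blank, blank] [blank, one] ++ ([zero] ++ rep (2 * k + 6) one))) := by
  simp [Weven, defectWord]

lemma length_Wodd {k a : ℕ} (ha : 1 ≤ a) (hak : a ≤ k) : (Wodd k a).length = 6 * k + 14 := by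
  simp [Wodd_eq_defectWord, length_defectWord ha hak]
  ring

lemma length_Weven {k a : ℕ} (ha : 1 ≤ a) (hak : a ≤ k) :
    (Weven k a).length = 6 * k + 14 := by
  rw [← List.length_reverse, reverse_Weven_eq_defectWord]
  simp [length_defectWord ha hak]
  ring

lemma force_Wodd_reverse_Weven {k a b : ℕ} (ha : 1 ≤ a) (hak : a ≤ k) (hb : 1 ≤ b)
    (hbk : b ≤ k) : force (Wodd k a) (Weven k b).reverse = if a = b then 1 else 0 := by
  rw [Wodd_eq_defectWord, reverse_Weven_eq_defectWord, force_append (by simp),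
    force_append (by simp),
    force_append (by simp [length_defectWord ha hak, length_defectWord hb hbk]),
    force_append (by simp), force_defectWord ha hak hb hbk (by rfl) (by rfl) (by rfl)]
  simp only [force_rep_blank_left]
  split_ifs <;> rfl

lemma force_Vword_reverse {k a b : ℕ} (ha : 1 ≤ a) (hak : a ≤ k) (hb : 1 ≤ b)
    (hbk : b ≤ k) :
    force (Vword k a) (Vword k b).reverse =
      force (Wodd k a) (Weven k b).reverse + force (Wodd k b) (Weven k a).reverse := by
  simp only [Vword, List.reverse_append, reverse_rep, List.append_assoc]
  rw [force_append (by simp [length_Wodd ha hak, length_Weven hb hbk]), force_append (by simp),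
    force_rep_blank_left,
    force_reverse_right (X := Weven k a) (by rw [length_Weven ha hak, length_Wodd hb hbk])]
  ring

theorem stmt11_general (k : ℕ) :
    ∀ a ∈ Finset.Icc 1 k, ∀ b ∈ Finset.Icc 1 k,
      (0 < force (Vword k a) ((Vword k b).reverse) ↔ a = b) := by
  intro a ha b hb
  rw [Finset.mem_Icc] at ha hb
  rw [force_Vword_reverse ha.1 ha.2 hb.1 hb.2, force_Wodd_reverse_Weven ha.1 ha.2 hb.1 hb.2,
    force_Wodd_reverse_Weven hb.1 hb.2 ha.1 ha.2]
  by_cases hab : a = b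
  · simp [hab]
  · simp [hab, Ne.symm hab]

/-- The concatenated words are attracted exactly when their indices agree. -/
theorem stmt11 (k : ℕ) (hk : 0 < k) :
    ∀ a ∈ Finset.Icc 1 k, ∀ b ∈ Finset.Icc 1 k,
      (0 < force (Vword k a) ((Vword k b).reverse) ↔ a = b) :=
  stmt11_general k
end

section
/- Let k be a positive integer divisible by 4, let N = C(k, k/2), and let C_1, …, C_N enumerate the bit words of length k with exactly k/2 ones. Define α(0) = 1⋄, α(1) = ⋄1, β(0) = 1⋄, β(1) = 0⋄, and for a bit word C of length k let M_{α,C} = α(C[1])⋯α(C[k]) and M_{β,C} = β(C[1])⋯β(C[k]). For a ∈ {1,…,N} define W_{2a−1} = ⋄^{6k} 1^{k/4} ⋄^{11k/4} 1 1 M_{α,C_a} 1 ⋄^{11k/4+1} 1^{k/4−1} ⋄^{6k+1} and W_{2a} = 1^{9k+1} ⋄ M_{β,Rev(C_a)} ⋄ ⋄ 1^{9k}. Then for all a, b ∈ {1,…,N}, f(W_{2a−1}, Rev(W_{2b})) = 1 if a = b, and f(W_{2a−1}, Rev(W_{2b})) ≤ 0 if a ≠ b. -/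
open Dip

/-- `α(0) = 1⋄`, `α(1) = ⋄1`. -/
def amap : Bool → List Dip
  | false => [one, blank]
  | true => [blank, one]

/-- `β(0) = 1⋄`, `β(1) = 0⋄`. -/
def bmap : Bool → List Dip
  | false => [one, blank]
  | true => [zero, blank]

/-- `M_{α,C} = α(C[1]) α(C[2]) ⋯ α(C[k])`. -/
def MA (C : List Bool) : List Dip := (C.map amap).flatten

/-- `M_{β,C} = β(C[1]) β(C[2]) ⋯ β(C[k])`. -/
def MB (C : List Bool) : List Dip := (C.map bmap).flatten

/-- `W_{2a-1} = ⋄^{6k} 1^{k/4} ⋄^{11k/4} 1 1 M_{α,C_a} 1 ⋄^{11k/4+1} 1^{k/4-1} ⋄^{6k+1}`. -/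
def WoddC (k : ℕ) (C : List Bool) : List Dip :=
  rep (6 * k) blank ++ rep (k / 4) one ++ rep (11 * k / 4) blank ++ [one, one] ++
    MA C ++ [one] ++ rep (11 * k / 4 + 1) blank ++ rep (k / 4 - 1) one ++
    rep (6 * k + 1) blank

/-- `W_{2a} = 1^{9k+1} ⋄ M_{β,Rev(C_a)} ⋄ ⋄ 1^{9k}`. -/
def WevenC (k : ℕ) (C : List Bool) : List Dip :=
  rep (9 * k + 1) one ++ [blank] ++ MB C.reverse ++ [blank, blank] ++ rep (9 * k) one


/-!
Aligning `W_{2a-1}` against `Rev(W_{2b})`, the letters outside `M_{α,C_a}` meet a blank except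
for the runs `1^{k/4}` and `1^{k/4-1}`, which meet ones and contribute `1 - k/2`; the blocks `M_{α,C_a}` and
`Rev(M_{β,Rev(C_b)})` interact only where `C_a` has a one, with force `+1` if `C_b` has a one
there too and `-1` otherwise. Hence the force is `2|C_a ∧ C_b| - |C_a| - k/2 + 1`, which is `1`
for `C_a = C_b` and at most `-1` for distinct words of weight `k/2`.
-/

namespace Dip

@[simp] lemma lf_blank_right (x : Dip) : lf x blank = 0 := by cases x <;> rfl

end Dip

lemma force_append_s15 {X₁ X₂ Y₁ Y₂ : List Dip} (h : X₁.length = Y₁.length) :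
    force (X₁ ++ X₂) (Y₁ ++ Y₂) = force X₁ Y₁ + force X₂ Y₂ := by
  rw [force, List.zipWith_append h, List.sum_append, force, force]

@[simp] lemma force_nil_left (Y : List Dip) : force [] Y = 0 := rfl

@[simp] lemma force_cons_cons (x y : Dip) (X Y : List Dip) :
    force (x :: X) (y :: Y) = lf x y + force X Y := by
  simp [force]

lemma force_replicate_one_right (X : List Dip) :
    force X (List.replicate X.length one) = (X.count zero : ℤ) - X.count one := by
  induction X with
  | nil => rfl
  | cons x X ih =>
    rw [List.length_cons, List.replicate_succ, force_cons_cons, ih]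
    cases x <;> simp [lf] <;> omega

lemma reverse_MB_reverse (B : List Bool) :
    (MB B.reverse).reverse = (B.map fun b => (bmap b).reverse).flatten := by
  simp [MB, List.reverse_flatten, List.map_reverse, Function.comp_def]

lemma length_MA (A : List Bool) : (MA A).length = 2 * A.length := by
  induction A with
  | nil => rfl
  | cons a A ih => cases a <;> simp_all [MA, amap] <;> omega

lemma length_flatten_map_reverse_bmap (B : List Bool) :
    (B.map fun b => (bmap b).reverse).flatten.length = 2 * B.length := by
  induction B with
  | nil => rfl
  | cons b B ih => cases b <;> simp_all [bmap] <;> omega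

lemma force_MA_flatten_map_reverse_bmap :
    ∀ A B : List Bool, A.length = B.length →
      force (MA A) (B.map fun b => (bmap b).reverse).flatten
        = 2 * ((List.zipWith (· && ·) A B).count true : ℤ) - A.count true
  | [], [], _ => rfl
  | a :: A, b :: B, h => by
    have hblock : (amap a).length = (bmap b).reverse.length := by cases a <;> cases b <;> rfl
    simp only [MA, List.map_cons, List.flatten_cons, List.zipWith_cons_cons]
    rw [force_append_s15 hblock, ← MA,
      force_MA_flatten_map_reverse_bmap A B (by simpa using h)]
    cases a <;> cases b <;> simp [amap, bmap, lf] <;> ring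

lemma two_mul_count_zipWith_and_le :
    ∀ A B : List Bool, 2 * (List.zipWith (· && ·) A B).count true ≤ A.count true + B.count true
  | [], _ => by simp
  | _ :: _, [] => by simp
  | a :: A, b :: B => by
    have := two_mul_count_zipWith_and_le A B
    cases a <;> cases b <;> simp <;> omega

lemma two_mul_count_zipWith_and_lt_of_ne :
    ∀ A B : List Bool, A.length = B.length → A ≠ B →
      2 * (List.zipWith (· && ·) A B).count true < A.count true + B.count true
  | [], [], _, hne => absurd rfl hne
  | a :: A, b :: B, hlen, hne => by
    by_cases hab : a = b
    · subst hab
      have := two_mul_count_zipWith_and_lt_of_ne A B (by simpa using hlen) (by simpa using hne)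
      cases a <;> simp <;> omega
    · have := two_mul_count_zipWith_and_le A B
      cases a <;> cases b <;> simp_all <;> omega

lemma force_WoddC_reverse_WevenC {k : ℕ} (hk : 0 < k) (h4 : 4 ∣ k) {A B : List Bool}
    (hA : A.length = k) (hB : B.length = k) :
    force (WoddC k A) (WevenC k B).reverse
      = 2 * ((List.zipWith (· && ·) A B).count true : ℤ) - A.count true - (k / 2 : ℕ) + 1 := by
  obtain ⟨m, rfl⟩ := h4
  set P := rep (6 * (4 * m)) blank ++ rep (4 * m / 4) one ++ rep (11 * (4 * m) / 4) blank
  set Q := rep (11 * (4 * m) / 4 + 1) blank ++ rep (4 * m / 4 - 1) one ++ rep (6 * (4 * m) + 1) blank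
  have hodd : WoddC (4 * m) A = P ++ ([one, one] ++ (MA A ++ ([one] ++ Q))) := by
    simp [WoddC, P, Q]
  have hP : P.length = 9 * (4 * m) := by simp [P, rep]; omega
  have hQ : Q.length = 9 * (4 * m) + 1 := by simp [Q, rep]; omega
  have heven : (WevenC (4 * m) B).reverse = List.replicate P.length one ++ ([blank, blank] ++
      ((B.map fun b => (bmap b).reverse).flatten ++ ([blank] ++ List.replicate Q.length one))) := by
    simp [WevenC, rep, reverse_MB_reverse, hP, hQ]
  have hmid : (MA A).length = (B.map fun b => (bmap b).reverse).flatten.length := by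
    rw [length_MA, length_flatten_map_reverse_bmap, hA, hB]
  rw [hodd, heven, force_append_s15 (by simp)]
  simp only [List.cons_append, List.nil_append, force_cons_cons, Dip.lf_blank_right]
  rw [force_append_s15 hmid]
  simp only [force_cons_cons, Dip.lf_blank_right]
  rw [force_replicate_one_right, force_replicate_one_right,
    force_MA_flatten_map_reverse_bmap A B (hA.trans hB.symm)]
  simp [P, Q, rep, List.count_replicate]
  omega

theorem stmt15_general (k : ℕ) (hk : 0 < k) (h4 : 4 ∣ k) (N : ℕ)
    (C : ℕ → List Bool)
    (hwords : ∀ a ∈ Finset.Icc 1 N, (C a).length = k ∧ (C a).count true = k / 2)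
    (hinj : ∀ a ∈ Finset.Icc 1 N, ∀ b ∈ Finset.Icc 1 N, C a = C b → a = b) :
    ∀ a ∈ Finset.Icc 1 N, ∀ b ∈ Finset.Icc 1 N,
      (a = b → force (WoddC k (C a)) ((WevenC k (C b)).reverse) = 1) ∧
      (a ≠ b → force (WoddC k (C a)) ((WevenC k (C b)).reverse) ≤ 0) := by
  intro a ha b hb
  obtain ⟨hAlen, hAcount⟩ := hwords a ha
  obtain ⟨hBlen, hBcount⟩ := hwords b hb
  rw [force_WoddC_reverse_WevenC hk h4 hAlen hBlen, hAcount]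
  refine ⟨fun hab => ?_, fun hab => ?_⟩
  · subst hab
    rw [List.zipWith_self, List.map_id'' Bool.and_self, hAcount]
    ring
  · have := two_mul_count_zipWith_and_lt_of_ne (C a) (C b) (hAlen.trans hBlen.symm)
      (mt (hinj a ha b hb) hab)
    omega

/-- Forces in the logarithmic-length construction: `f(W_{2a-1}, Rev(W_{2b})) = 1` if
`a = b` and is non-positive otherwise. -/
theorem stmt15 (k : ℕ) (hk : 0 < k) (h4 : 4 ∣ k) (N : ℕ)
    (hN : N = Nat.choose k (k / 2)) (C : ℕ → List Bool)
    (hwords : ∀ a ∈ Finset.Icc 1 N, (C a).length = k ∧ (C a).count true = k / 2)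
    (hinj : ∀ a ∈ Finset.Icc 1 N, ∀ b ∈ Finset.Icc 1 N, C a = C b → a = b) :
    ∀ a ∈ Finset.Icc 1 N, ∀ b ∈ Finset.Icc 1 N,
      (a = b → force (WoddC k (C a)) ((WevenC k (C b)).reverse) = 1) ∧
      (a ≠ b → force (WoddC k (C a)) ((WevenC k (C b)).reverse) ≤ 0) :=
  stmt15_general k hk h4 N C hwords hinj
end
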